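/- arXiv:1808.04998 — 6 statements merged into one kernel-verified Lean document; each statement's English description precedes it below -/
import Mathlib

section
/- Let C be a finitely complete category. Then C is regular if and only if (1) every morphism factors as a regular epimorphism followed by a monomorphism, (2) for every regular epimorphism f : A → B and every object E, the induced morphism 1_E × f : E × A → E × B is a regular epimorphism, and (3) regular epimorphisms are stable under pullback along split monomorphisms. -/
open CategoryTheory CategoryTheory.Limits

/-- A morphism is a regular epimorphism (the coequalizer of some pair of morphisms). -/
def IsRegEpi {C : Type*} [Category C] {A B : C} (f : A ⟶ B) : Prop :=
  Nonempty (RegularEpi f)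

/-- A finitely complete category is regular if every morphism factors as a regular
epimorphism followed by a monomorphism, and these factorizations (i.e. regular
epimorphisms) are stable under pullback. -/
structure IsRegularCategory (C : Type*) [Category C] [HasFiniteLimits C] : Prop where
  factor : ∀ {A B : C} (f : A ⟶ B), ∃ (I : C) (p : A ⟶ I) (i : I ⟶ B),
    IsRegEpi p ∧ Mono i ∧ p ≫ i = f
  regEpi_pullback_stable : ∀ {P E A B : C} (fst : P ⟶ E) (snd : P ⟶ A)
    (p : E ⟶ B) (f : A ⟶ B), IsPullback fst snd p f → IsRegEpi f → IsRegEpi fst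

/-!
`1_E × f` is the pullback of `f` along the projection `E × B ⟶ B`, which gives one direction.
Conversely, a pullback of `f` along any `p : E ⟶ B` is also the pullback of `1_E × f` along
the graph `⟨1_E, p⟩ : E ⟶ E × B` (cancel the pullback square of `1_E × f` from the given one),
and the graph is split by the first projection.
-/

namespace CategoryTheory.IsPullback

variable {C : Type*} [Category C] [HasBinaryProducts C]

lemma of_prod_snd_with_id (E : C) {A B : C} (f : A ⟶ B) :
    IsPullback (prod.map (𝟙 E) f) prod.snd prod.snd f where
  isLimit' := ⟨PullbackCone.IsLimit.mk _
    (fun s ↦ prod.lift (s.fst ≫ prod.fst) s.snd)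
    (fun s ↦ by ext <;> simp [prod.lift_fst, prod.lift_snd, PullbackCone.condition])
    (fun s ↦ prod.lift_snd _ _)
    (fun s m h₁ h₂ ↦ by ext <;> simp [prod.lift_fst, prod.lift_snd, ← h₁, ← h₂])⟩

lemma graph {P E A B : C} {fst : P ⟶ E} {snd : P ⟶ A} {p : E ⟶ B} {f : A ⟶ B}
    (h : IsPullback fst snd p f) :
    IsPullback fst (prod.lift fst snd) (prod.lift (𝟙 E) p) (prod.map (𝟙 E) f) :=
  of_bot (by simpa [prod.lift_snd] using h)
    (by ext <;> simp [prod.lift_fst, prod.lift_snd, h.w]) (of_prod_snd_with_id E f)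

end CategoryTheory.IsPullback

/-- A finitely complete category `C` is regular if and only if (1) every morphism
factors as a regular epimorphism followed by a monomorphism, (2) for every regular
epimorphism `f : A ⟶ B` and every object `E` the morphism `1_E × f` is a regular
epimorphism, and (3) regular epimorphisms are stable under pullback along split
monomorphisms. -/
theorem regular_iff (C : Type*) [Category C] [HasFiniteLimits C] :
    IsRegularCategory C ↔
      ((∀ {A B : C} (f : A ⟶ B), ∃ (I : C) (p : A ⟶ I) (i : I ⟶ B),
          IsRegEpi p ∧ Mono i ∧ p ≫ i = f) ∧
        (∀ (E : C) {A B : C} (f : A ⟶ B), IsRegEpi f →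
          IsRegEpi (Limits.prod.map (𝟙 E) f)) ∧
        (∀ {P E A B : C} (fst : P ⟶ E) (snd : P ⟶ A) (s : E ⟶ B) (f : A ⟶ B),
          IsPullback fst snd s f → IsSplitMono s → IsRegEpi f → IsRegEpi fst)) := by
  constructor
  · intro hC
    exact ⟨hC.factor,
      fun E _ _ f hf ↦ hC.regEpi_pullback_stable _ _ _ _ (.of_prod_snd_with_id E f) hf,
      fun fst snd s f h _ hf ↦ hC.regEpi_pullback_stable fst snd s f h hf⟩
  · rintro ⟨hfactor, hprod, hsplit⟩
    refine ⟨hfactor, fun fst snd p f h hf ↦ ?_⟩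
    have graph_split : IsSplitMono (prod.lift (𝟙 _) p) := .mk' ⟨prod.fst, prod.lift_fst _ _⟩
    exact hsplit _ _ _ _ h.graph graph_split (hprod _ f hf)
end

section
/- Let f : A → C be a morphism of cocommutative Hopf algebras over a field K, and let HKer(f) = {a ∈ A : f(a₁) ⊗ a₂ = 1 ⊗ a} be its Hopf kernel. Then HKer(f) is a normal Hopf subalgebra of A, i.e., for every a ∈ A and x ∈ HKer(f), a₁ x S(a₂) ∈ HKer(f). -/
open TensorProduct Coalgebra

/-- A coalgebra is cocommutative if the comultiplication is invariant under the
switch map. -/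
def IsCocomm (K A : Type*) [CommSemiring K] [AddCommMonoid A] [Module K A]
    [Coalgebra K A] : Prop :=
  (TensorProduct.comm K A A).toLinearMap ∘ₗ (Coalgebra.comul (R := K) (A := A)) =
    Coalgebra.comul

/-- The linear map sending `a ⊗ b` to the Sweedler sum `a₁ * b * S(a₂)`
(the adjoint action of a Hopf algebra on itself). -/
noncomputable def adAct (K A : Type*) [CommSemiring K] [Semiring A] [HopfAlgebra K A] :
    A ⊗[K] A →ₗ[K] A :=
  (LinearMap.mul' K A) ∘ₗ
    (LinearMap.lTensor A ((LinearMap.mul' K A) ∘ₗ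
      (TensorProduct.comm K A A).toLinearMap ∘ₗ
      (LinearMap.rTensor A (HopfAlgebra.antipode (R := K) (A := A))))) ∘ₗ
    (TensorProduct.assoc K A A A).toLinearMap ∘ₗ
    (LinearMap.rTensor A (Coalgebra.comul (R := K) (A := A)))

/-- The linear map sending `x ⊗ y` to the Sweedler sum
`x₁ * y₁ * S(x₂) * S(y₂)` (the "Hopf commutator" `{x, y}`). -/
noncomputable def hopfComm (K A : Type*) [CommSemiring K] [Semiring A] [HopfAlgebra K A] :
    A ⊗[K] A →ₗ[K] A :=
  (LinearMap.mul' K A) ∘ₗ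
    (TensorProduct.map (LinearMap.mul' K A)
      ((LinearMap.mul' K A) ∘ₗ
        TensorProduct.map (HopfAlgebra.antipode (R := K) (A := A))
          (HopfAlgebra.antipode (R := K) (A := A)))) ∘ₗ
    (TensorProduct.tensorTensorTensorComm K A A A A).toLinearMap ∘ₗ
    (TensorProduct.map (Coalgebra.comul (R := K)) (Coalgebra.comul (R := K)))

/-!
If `A` is cocommutative, `Δ : A → A ⊗ A` is a morphism of bialgebras, hence so is
`ρ = (f ⊗ id) ∘ Δ : A → C ⊗ A`, and `HKer f = {x | ρ x = 1 ⊗ x}`. Bialgebra morphisms of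
Hopf algebras commute with antipodes and therefore with the adjoint action, so for
`x ∈ HKer f`, writing `ad a x = a₁ x S(a₂)`,
`ρ (ad a x) = ad (ρ a) (1 ⊗ x) = ∑ ad (f a₁) 1 ⊗ ad a₂ x = ∑ ε(a₁) 1 ⊗ ad a₂ x = 1 ⊗ ad a x`.
-/

open HopfAlgebra WithConv

section Antipode

variable {K A B : Type*} [CommSemiring K] [Semiring A] [HopfAlgebra K A] [Semiring B]
  [HopfAlgebra K B]

theorem BialgHom.map_antipode (φ : A →ₐc[K] B) (a : A) :
    φ (antipode K a) = antipode K (φ a) := by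
  have hl : toConv (antipode K ∘ₗ φ.toLinearMap) * toConv φ.toLinearMap = 1 := by
    have h := LinearMap.convMul_comp_coalgHom_distrib (toConv (antipode K (A := B)))
      (toConv LinearMap.id) φ.toCoalgHom
    rw [LinearMap.antipode_mul_id] at h
    ext b
    simpa using (congr($h b)).symm
  have hr : toConv φ.toLinearMap * toConv (φ.toLinearMap ∘ₗ antipode K) = 1 := by
    have h := LinearMap.algHom_comp_convMul_distrib φ.toAlgHom (toConv LinearMap.id)
      (toConv (antipode K (A := A)))
    rw [LinearMap.id_mul_antipode] at h
    ext b
    have hb := congr($h b)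
    simp only [LinearMap.convOne_apply, LinearMap.comp_apply, AlgHom.toLinearMap_apply,
      AlgHomClass.commutes] at hb
    exact hb.symm
  exact (congr($(left_inv_eq_right_inv hl hr).ofConv a)).symm

end Antipode

section AdjointAction

variable {K A : Type*} [CommSemiring K] [Semiring A] [HopfAlgebra K A]

theorem adAct_tmul_eq_sum {a : A} {ι : Type*} (𝓡 : Coalgebra.Repr K a ι) (x : A) :
    adAct K A (a ⊗ₜ x) = ∑ i ∈ 𝓡.index, 𝓡.left i * x * antipode K (𝓡.right i) := by
  simp [adAct, ← 𝓡.eq, sum_tmul, mul_assoc]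

theorem adAct_tmul_one (a : A) : adAct K A (a ⊗ₜ 1) = algebraMap K A (counit a) := by
  simp [adAct_tmul_eq_sum (ℛ K a), sum_mul_antipode_eq_algebraMap_counit]

variable {B : Type*} [Semiring B] [HopfAlgebra K B]

theorem BialgHom.map_adAct (φ : A →ₐc[K] B) (a x : A) :
    φ (adAct K A (a ⊗ₜ x)) = adAct K B (φ a ⊗ₜ φ x) := by
  simp [adAct_tmul_eq_sum (ℛ K a), adAct_tmul_eq_sum ((ℛ K a).induced φ),
    ← φ.map_antipode]

theorem adAct_tmul_tmul (b c : B) (a x : A) :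
    adAct K (B ⊗[K] A) ((b ⊗ₜ a) ⊗ₜ (c ⊗ₜ x)) =
      adAct K B (b ⊗ₜ c) ⊗ₜ adAct K A (a ⊗ₜ x) := by
  simp [adAct_tmul_eq_sum ((ℛ K b).tmul (ℛ K a)), adAct_tmul_eq_sum (ℛ K b),
    adAct_tmul_eq_sum (ℛ K a), Finset.sum_product, sum_tmul, tmul_sum]
  exact Finset.sum_comm

theorem adAct_tmul_one_tmul (c : B) (a x : A) :
    adAct K (B ⊗[K] A) ((c ⊗ₜ a) ⊗ₜ (1 ⊗ₜ x)) =
      1 ⊗ₜ adAct K A ((counit (R := K) c • a) ⊗ₜ x) := by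
  rw [adAct_tmul_tmul, adAct_tmul_one, Algebra.algebraMap_eq_smul_one, smul_tmul,
    ← LinearMap.map_smul, smul_tmul']

end AdjointAction

theorem hopfKernel_normal_general
    {K A C : Type*} [Field K] [Ring A] [HopfAlgebra K A] [Ring C] [HopfAlgebra K C]
    (hA : _root_.IsCocomm K A) (f : A →ₐc[K] C) :
    ∀ (a : A), ∀ x ∈ {a : A |
        LinearMap.rTensor A f.toLinearMap (Coalgebra.comul (R := K) a) = (1 : C) ⊗ₜ[K] a},
      adAct K A (a ⊗ₜ[K] x) ∈ {a : A |
        LinearMap.rTensor A f.toLinearMap (Coalgebra.comul (R := K) a) = (1 : C) ⊗ₜ[K] a} := by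
  intro a x hx
  have : Coalgebra.IsCocomm K A := ⟨hA⟩
  let ρ := (BialgHom.rTensor A f).comp (Bialgebra.comulBialgHom K A)
  have ρ_apply (b : A) :
      ρ b = ∑ i ∈ (ℛ K b).index, f ((ℛ K b).left i) ⊗ₜ (ℛ K b).right i := by
    change LinearMap.rTensor A f.toLinearMap (comul b) = _
    simp [← (ℛ K b).eq]
    rfl
  change ρ x = 1 ⊗ₜ x at hx
  change ρ (adAct K A (a ⊗ₜ x)) = 1 ⊗ₜ adAct K A (a ⊗ₜ x)
  rw [BialgHom.map_adAct, hx, ρ_apply, sum_tmul, map_sum]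
  simp only [adAct_tmul_one_tmul, CoalgHomClass.counit_comp_apply, ← tmul_sum, ← map_sum,
    ← sum_tmul, sum_counit_smul]

/-- The Hopf kernel `HKer(f) = {a | f(a₁) ⊗ a₂ = 1 ⊗ a}` of a morphism of
cocommutative Hopf algebras is normal: `a₁ x S(a₂) ∈ HKer(f)` for all `a ∈ A` and
`x ∈ HKer(f)`. -/
theorem hopfKernel_normal
    {K A C : Type*} [Field K] [Ring A] [HopfAlgebra K A] [Ring C] [HopfAlgebra K C]
    (hA : _root_.IsCocomm K A) (hC : _root_.IsCocomm K C) (f : A →ₐc[K] C) :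
    ∀ (a : A), ∀ x ∈ {a : A |
        LinearMap.rTensor A f.toLinearMap (Coalgebra.comul (R := K) a) = (1 : C) ⊗ₜ[K] a},
      adAct K A (a ⊗ₜ[K] x) ∈ {a : A |
        LinearMap.rTensor A f.toLinearMap (Coalgebra.comul (R := K) a) = (1 : C) ⊗ₜ[K] a} :=
  hopfKernel_normal_general hA f
end

section
/- Let p : A → B be a morphism of cocommutative Hopf algebras over a field K and C ⊆ B a Hopf subalgebra. Then for any Hopf subalgebra D ⊆ A, D ⊆ p⁻¹(C) if and only if p(D) ⊆ C; in other words, direct image and h-inverse image along p form a Galois connection between the lattices of Hopf subalgebras of A and of B. -/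
open TensorProduct Coalgebra

/-- The `h`-inverse of a Hopf subalgebra `C ⊆ B` along `p : A → B`:
`p⁻¹(C) = {x ∈ A | p(x₁) ⊗ x₂ − 1 ⊗ x ∈ C⁺ ⊗ A}`. -/
noncomputable def hInv {K A B : Type*} [Field K] [Ring A] [HopfAlgebra K A]
    [Ring B] [HopfAlgebra K B] (p : A →ₐc[K] B) (C : Subalgebra K B) : Set A :=
  {x : A | LinearMap.rTensor A p.toLinearMap (Coalgebra.comul (R := K) x) - (1 : B) ⊗ₜ[K] x ∈
    LinearMap.range (LinearMap.rTensor A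
      (Submodule.subtype (C.toSubmodule ⊓ LinearMap.ker (Coalgebra.counit (R := K)))))}

/-!
Applying `id ⊗ ε` to `p(x₁) ⊗ x₂ − 1 ⊗ x ∈ C⁺ ⊗ A` gives `p(x) − ε(x)1 ∈ C`, so
`p⁻¹(C)` is mapped into `C`. Conversely, `p(x₁) ⊗ x₂ − 1 ⊗ x = (p − ηε)(x₁) ⊗ x₂` by the counit
axiom, and `p − ηε` maps any subcoalgebra `D` with `p(D) ⊆ C` into `C⁺`, so `Δ(D) ⊆ D ⊗ D`
places every element of `D` in `p⁻¹(C)`.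
-/

namespace TensorProduct

variable {R M N Q : Type*} [CommRing R] [AddCommGroup M] [Module R M] [AddCommGroup N]
  [Module R N] [AddCommGroup Q] [Module R Q]

theorem rTensor_mem_range_rTensor_subtype {S : Submodule R M} {T : Submodule R N}
    (g : M →ₗ[R] N) (hg : ∀ m ∈ S, g m ∈ T) {z : M ⊗[R] Q}
    (hz : z ∈ LinearMap.range (S.subtype.rTensor Q)) :
    g.rTensor Q z ∈ LinearMap.range (T.subtype.rTensor Q) := by
  obtain ⟨w, rfl⟩ := hz
  refine ⟨((g.domRestrict S).codRestrict T fun m ↦ hg m m.2).rTensor Q w, ?_⟩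
  rw [← LinearMap.rTensor_comp_apply, ← LinearMap.rTensor_comp_apply]
  rfl

theorem rid_lTensor_mem_of_mem_range_rTensor_subtype {S : Submodule R M} (φ : N →ₗ[R] R)
    {z : M ⊗[R] N} (hz : z ∈ LinearMap.range (S.subtype.rTensor N)) :
    TensorProduct.rid R M (φ.lTensor M z) ∈ S := by
  obtain ⟨w, rfl⟩ := hz
  have hcomm : (TensorProduct.rid R M).toLinearMap ∘ₗ φ.lTensor M ∘ₗ S.subtype.rTensor N =
      S.subtype ∘ₗ (TensorProduct.rid R S).toLinearMap ∘ₗ φ.lTensor S := by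
    ext; simp
  rw [← LinearMap.comp_apply (φ.lTensor M), ← LinearEquiv.coe_toLinearMap,
    ← LinearMap.comp_apply, hcomm]
  exact Submodule.coe_mem _

end TensorProduct

section Coalgebra

variable {R A B : Type*} [CommRing R] [AddCommGroup A] [Module R A] [Coalgebra R A]
  [AddCommGroup B] [Module R B]

theorem rid_lTensor_counit_rTensor_comul (f : A →ₗ[R] B) (x : A) :
    TensorProduct.rid R B ((counit (R := R)).lTensor B (f.rTensor A (comul x))) = f x := by
  rw [← LinearMap.comp_apply (counit.lTensor B), LinearMap.lTensor_comp_rTensor,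
    ← LinearMap.rTensor_comp_lTensor, LinearMap.comp_apply, lTensor_counit_comul]
  simp

theorem rTensor_comul_sub_one_tmul {B : Type*} [Ring B] [Algebra R B] (f : A →ₗ[R] B) (x : A) :
    f.rTensor A (comul x) - (1 : B) ⊗ₜ[R] x =
      (f - Algebra.linearMap R B ∘ₗ counit).rTensor A (comul x) := by
  rw [LinearMap.rTensor_sub, LinearMap.sub_apply, LinearMap.rTensor_comp_apply,
    rTensor_counit_comul]
  simp

end Coalgebra

section HInv

variable {K A B : Type*} [Field K] [Ring A] [HopfAlgebra K A] [Ring B] [HopfAlgebra K B]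
  {p : A →ₐc[K] B} {C : Subalgebra K B}

theorem map_mem_of_mem_hInv {x : A} (hx : x ∈ hInv p C) : p x ∈ C := by
  have hmem := (rid_lTensor_mem_of_mem_range_rTensor_subtype counit hx).1
  rw [map_sub, map_sub, rid_lTensor_counit_rTensor_comul, LinearMap.lTensor_tmul,
    TensorProduct.rid_tmul] at hmem
  have hsplit : p x = (p x - counit (R := K) x • (1 : B)) + counit (R := K) x • (1 : B) := by
    abel
  rw [hsplit]
  exact C.add_mem hmem (C.smul_mem C.one_mem _)

theorem mem_hInv_of_comul_mem_range {D : Submodule K A} (hD : ∀ d ∈ D, p d ∈ C) {x : A}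
    (hx : comul (R := K) x ∈ LinearMap.range (D.subtype.rTensor A)) : x ∈ hInv p C := by
  rw [hInv, Set.mem_ofPred_eq, rTensor_comul_sub_one_tmul]
  refine rTensor_mem_range_rTensor_subtype _ (fun d hd ↦ Submodule.mem_inf.mpr ⟨?_, ?_⟩) hx
  · exact C.sub_mem (hD d hd) (C.algebraMap_mem _)
  · simp [CoalgHomClass.counit_comp_apply]

end HInv

theorem hInv_galoisConnection_general
    {K A B : Type*} [Field K] [Ring A] [HopfAlgebra K A] [Ring B] [HopfAlgebra K B]
    (p : A →ₐc[K] B) (C : Subalgebra K B)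
    (D : Subalgebra K A)
    (hD_comul : ∀ d ∈ D, Coalgebra.comul (R := K) d ∈
      LinearMap.range (TensorProduct.map D.toSubmodule.subtype D.toSubmodule.subtype)) :
    (D : Set A) ⊆ hInv p C ↔ ∀ d ∈ D, p d ∈ C := by
  refine ⟨fun h d hd ↦ map_mem_of_mem_hInv (h hd), fun h d hd ↦ ?_⟩
  refine mem_hInv_of_comul_mem_range (D := D.toSubmodule) h ?_
  obtain ⟨t, ht⟩ := hD_comul d hd
  rw [← ht, ← LinearMap.rTensor_comp_lTensor]
  exact LinearMap.mem_range_self _ _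

/-- Galois connection: `D ⊆ p⁻¹(C)` if and only if `p(D) ⊆ C`, for Hopf subalgebras
`D ⊆ A`, `C ⊆ B` and a morphism of cocommutative Hopf algebras `p : A → B`. -/
theorem hInv_galoisConnection
    {K A B : Type*} [Field K] [Ring A] [HopfAlgebra K A] [Ring B] [HopfAlgebra K B]
    (hA : _root_.IsCocomm K A) (hB : _root_.IsCocomm K B) (p : A →ₐc[K] B) (C : Subalgebra K B)
    (hC_comul : ∀ c ∈ C, Coalgebra.comul (R := K) c ∈
      LinearMap.range (TensorProduct.map C.toSubmodule.subtype C.toSubmodule.subtype))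
    (hC_antipode : ∀ c ∈ C, HopfAlgebra.antipode (R := K) c ∈ C)
    (D : Subalgebra K A)
    (hD_comul : ∀ d ∈ D, Coalgebra.comul (R := K) d ∈
      LinearMap.range (TensorProduct.map D.toSubmodule.subtype D.toSubmodule.subtype))
    (hD_antipode : ∀ d ∈ D, HopfAlgebra.antipode (R := K) d ∈ D) :
    (D : Set A) ⊆ hInv p C ↔ ∀ d ∈ D, p d ∈ C :=
  hInv_galoisConnection_general p C D hD_comul
end

section
/- Let p : A → B be a morphism of cocommutative Hopf algebras over a field K and C ⊆ B a Hopf subalgebra. Then C = p(p⁻¹(C)) if and only if C = p(D) for some Hopf subalgebra D ⊆ A. -/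
open TensorProduct Coalgebra

/-!
Write `h = p - η ∘ ε`, so that `hInv p C = {x | h(x₁) ⊗ x₂ ∈ C⁺ ⊗ A}`. Applying `id ⊗ ε` shows
`h(hInv p C) ⊆ C⁺`, i.e. `p(hInv p C) ⊆ C`; and a subcoalgebra `D` with `p(D) ⊆ C` has
`h(D) ⊆ C⁺`, hence `D ⊆ hInv p C`. So `p(D) = C` forces `p(hInv p C) = C`.

Conversely, `hInv p C` is itself a Hopf subalgebra. It is closed under products because
`x ↦ p(x₁) ⊗ x₂` is multiplicative and `C⁺` is an ideal of `C`, and under the antipode because,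
`A` being cocommutative, `S` is a coalgebra map, and it commutes with `p` and with `η ∘ ε`.
Coassociativity and flatness over a field give `Δ(hInv p C) ⊆ hInv p C ⊗ A`, which
cocommutativity upgrades to `hInv p C ⊗ hInv p C`.
-/

open LinearMap WithConv

namespace BialgHom

variable {R A B : Type*} [CommSemiring R] [Semiring A] [HopfAlgebra R A]
  [Semiring B] [HopfAlgebra R B]

/-- Both sides are convolution inverses of `p`. -/
theorem toLinearMap_comp_antipode (p : A →ₐc[R] B) :
    p.toLinearMap ∘ₗ HopfAlgebra.antipode R = HopfAlgebra.antipode R ∘ₗ p.toLinearMap := by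
  apply toConv_injective
  apply left_inv_eq_right_inv (a := toConv p.toLinearMap)
  · apply ofConv_injective
    have := algHom_comp_convMul_distrib (AlgHomClass.toAlgHom p)
      (toConv (HopfAlgebra.antipode R (A := A))) (toConv LinearMap.id)
    rw [antipode_mul_id, algHom_comp_convOne] at this
    exact this.symm
  · apply ofConv_injective
    have := convMul_comp_coalgHom_distrib (toConv LinearMap.id)
      (toConv (HopfAlgebra.antipode R (A := B))) p.toCoalgHom
    rw [id_mul_antipode, convOne_comp_coalgHom] at this
    exact this.symm

end BialgHom

namespace HopfAlgebra

variable {R A : Type*} [CommSemiring R] [Semiring A] [HopfAlgebra R A] [Coalgebra.IsCocomm R A]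

/-- Both sides are convolution inverses of `Δ`; that `(S ⊗ S) ∘ Δ` is one uses that `Δ` is a
coalgebra map, i.e. cocommutativity. -/
theorem comul_comp_antipode :
    comul ∘ₗ antipode R = TensorProduct.map (antipode R) (antipode R) ∘ₗ comul (A := A) := by
  apply toConv_injective
  symm
  apply left_inv_eq_right_inv (a := toConv (comul (R := R) (A := A))) _ comul_right_inv
  apply ofConv_injective
  calc ofConv (toConv (map (antipode R) (antipode R) ∘ₗ comul) * toConv (comul (A := A)))
      = ofConv (toConv (map (antipode R (A := A)) (antipode R)) * toConv (map id id)) ∘ₗ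
          (Coalgebra.comulCoalgHom R A).toLinearMap := by
        rw [convMul_comp_coalgHom_distrib, TensorProduct.map_id]; rfl
    _ = ofConv (1 : WithConv (A ⊗[R] A →ₗ[R] A ⊗[R] A)) ∘ₗ
          (Coalgebra.comulCoalgHom R A).toLinearMap := by
        rw [TensorProduct.map_convMul_map, antipode_mul_id]
        congr 1
        ext
        simp [Algebra.TensorProduct.one_def, Algebra.algebraMap_eq_smul_one,
          TensorProduct.smul_tmul, mul_smul]
    _ = ofConv (1 : WithConv (A →ₗ[R] A ⊗[R] A)) := convOne_comp_coalgHom _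

end HopfAlgebra

theorem TensorProduct.mem_range_map_subtype_of_mem_range_rTensor_of_mem_range_lTensor
    {K V : Type*} [Field K] [AddCommGroup V] [Module K V] {D : Submodule K V} {t : V ⊗[K] V}
    (hr : t ∈ range (rTensor V D.subtype)) (hl : t ∈ range (lTensor V D.subtype)) :
    t ∈ range (map D.subtype D.subtype) := by
  obtain ⟨π, hπ⟩ := D.subtype.exists_leftInverse_of_injective D.ker_subtype
  have hP : (D.subtype ∘ₗ π) ∘ₗ D.subtype = D.subtype := by rw [comp_assoc, hπ, comp_id]
  have hPr : rTensor V (D.subtype ∘ₗ π) t = t := by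
    obtain ⟨u, rfl⟩ := hr
    rw [← comp_apply, ← rTensor_comp, hP]
  have hPl : lTensor V (D.subtype ∘ₗ π) t = t := by
    obtain ⟨u, rfl⟩ := hl
    rw [← comp_apply, ← lTensor_comp, hP]
  refine ⟨map π π t, ?_⟩
  rw [← comp_apply, ← map_comp, ← rTensor_comp_lTensor, comp_apply, hPl, hPr]

namespace Algebra.TensorProduct

variable {R A B : Type*} [CommSemiring R] [Semiring A] [Algebra R A] [Semiring B] [Algebra R B]

theorem mul_mem_range_rTensor_subtype {I J L : Submodule R B}
    (hIJ : ∀ a ∈ I, ∀ b ∈ J, a * b ∈ L) {x y : B ⊗[R] A}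
    (hx : x ∈ LinearMap.range (LinearMap.rTensor A I.subtype))
    (hy : y ∈ LinearMap.range (LinearMap.rTensor A J.subtype)) :
    x * y ∈ LinearMap.range (LinearMap.rTensor A L.subtype) := by
  obtain ⟨u, rfl⟩ := hx
  obtain ⟨v, rfl⟩ := hy
  induction u using TensorProduct.induction_on with
  | zero => simp
  | add u u' hu hu' => rw [map_add, add_mul]; exact add_mem hu hu'
  | tmul a b =>
    induction v using TensorProduct.induction_on with
    | zero => simp
    | add v v' hv hv' => rw [map_add, mul_add]; exact add_mem hv hv'
    | tmul a' b' => exact ⟨⟨a * a', hIJ a a.2 a' a'.2⟩ ⊗ₜ (b * b'), by simp⟩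

end Algebra.TensorProduct

namespace Subalgebra

section Bialgebra

variable {K B : Type*} [CommSemiring K] [Semiring B] [Bialgebra K B] (C : Subalgebra K B)

/-- `C⁺` -/
def counitKer : Submodule K B := C.toSubmodule ⊓ ker (counit (R := K))

variable {C}

theorem mul_mem_counitKer_left {a b : B} (ha : a ∈ C.counitKer) (hb : b ∈ C) :
    a * b ∈ C.counitKer :=
  ⟨C.mul_mem ha.1 hb, by simp [Bialgebra.counit_mul, mem_ker.mp ha.2]⟩

theorem mul_mem_counitKer_right {a b : B} (ha : a ∈ C) (hb : b ∈ C.counitKer) :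
    a * b ∈ C.counitKer :=
  ⟨C.mul_mem ha hb.1, by simp [Bialgebra.counit_mul, mem_ker.mp hb.2]⟩

end Bialgebra

theorem antipode_mem_counitKer {K B : Type*} [CommSemiring K] [Semiring B] [HopfAlgebra K B]
    {C : Subalgebra K B} (hC : ∀ c ∈ C, HopfAlgebra.antipode K c ∈ C) {c : B}
    (hc : c ∈ C.counitKer) : HopfAlgebra.antipode K c ∈ C.counitKer :=
  ⟨hC c hc.1, by simpa using hc.2⟩

end Subalgebra

namespace Coalgebra

section CommSemiring

variable {R A M : Type*} [CommSemiring R] [AddCommMonoid A] [Module R A] [Coalgebra R A]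
  [AddCommMonoid M] [Module R M]

/-- `{x | h(x₁) ⊗ x₂ ∈ N ⊗ A}` -/
def comulComap (h : A →ₗ[R] M) (N : Submodule R M) : Submodule R A :=
  (range (rTensor A N.subtype)).comap (rTensor A h ∘ₗ comul)

theorem rTensor_rTensor_comp_comul_comp_comul (h : A →ₗ[R] M) :
    rTensor A (rTensor A h ∘ₗ comul) ∘ₗ comul =
      (_root_.TensorProduct.assoc R M A A).symm.toLinearMap ∘ₗ lTensor M comul ∘ₗ
        rTensor A h ∘ₗ comul := by
  simp [coassoc_simps]

theorem assoc_symm_comp_lTensor_comul_comp_rTensor {P : Type*} [AddCommMonoid P] [Module R P]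
    (f : P →ₗ[R] M) :
    (_root_.TensorProduct.assoc R M A A).symm.toLinearMap ∘ₗ lTensor M comul ∘ₗ rTensor A f =
      rTensor A (rTensor A f) ∘ₗ (_root_.TensorProduct.assoc R P A A).symm.toLinearMap ∘ₗ
        lTensor P comul := by
  simp [coassoc_simps]

theorem rid_comp_lTensor_counit_comp_rTensor {P : Type*} [AddCommMonoid P] [Module R P]
    (f : P →ₗ[R] M) :
    (_root_.TensorProduct.rid R M).toLinearMap ∘ₗ lTensor M counit ∘ₗ rTensor A f =
      f ∘ₗ (_root_.TensorProduct.rid R P).toLinearMap ∘ₗ lTensor P (counit (A := A)) := by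
  ext; simp

theorem apply_mem_of_mem_comulComap {h : A →ₗ[R] M} {N : Submodule R M} {x : A}
    (hx : x ∈ comulComap h N) : h x ∈ N := by
  obtain ⟨u, hu⟩ := hx
  suffices h x = N.subtype (_root_.TensorProduct.rid R N (lTensor N counit u)) from
    this ▸ Submodule.coe_mem _
  calc h x = (h ∘ₗ (_root_.TensorProduct.rid R A).toLinearMap ∘ₗ lTensor A counit) (comul x) := by
        simp
    _ = (_root_.TensorProduct.rid R M) (lTensor M counit (rTensor A h (comul x))) := by
        rw [← rid_comp_lTensor_counit_comp_rTensor]; rfl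
    _ = N.subtype (_root_.TensorProduct.rid R N (lTensor N counit u)) := by
        rw [← comp_apply (f := rTensor A h), ← hu]
        exact congr($(rid_comp_lTensor_counit_comp_rTensor (A := A) N.subtype) u)

theorem le_comulComap {h : A →ₗ[R] M} {N : Submodule R M} {D : Submodule R A}
    (hD : ∀ d ∈ D, comul d ∈ range (map D.subtype D.subtype)) (hDN : ∀ d ∈ D, h d ∈ N) :
    D ≤ comulComap h N := by
  intro d hd
  obtain ⟨u, hu⟩ := hD d hd
  let g : D →ₗ[R] N := (h ∘ₗ D.subtype).codRestrict N fun z ↦ hDN z z.2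
  refine ⟨map g D.subtype u, ?_⟩
  rw [comp_apply, ← hu, ← comp_apply (rTensor A N.subtype), ← comp_apply (rTensor A h),
    rTensor_comp_map, rTensor_comp_map]
  rfl

theorem map_mem_comulComap {h : A →ₗ[R] M} {N : Submodule R M} {σ : A →ₗ[R] A}
    {τ : M →ₗ[R] M} (hσ : comul ∘ₗ σ = map σ σ ∘ₗ comul) (hτ : h ∘ₗ σ = τ ∘ₗ h)
    (hN : ∀ m ∈ N, τ m ∈ N) {x : A} (hx : x ∈ comulComap h N) : σ x ∈ comulComap h N := by
  obtain ⟨u, hu⟩ := hx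
  have hτN : map τ σ ∘ₗ rTensor A N.subtype = rTensor A N.subtype ∘ₗ map (τ.restrict hN) σ :=
    TensorProduct.ext' fun _ _ ↦ rfl
  have hστ : rTensor A h ∘ₗ comul ∘ₗ σ = map τ σ ∘ₗ rTensor A h ∘ₗ comul := by
    rw [hσ, ← comp_assoc, rTensor_comp_map, ← comp_assoc, map_comp_rTensor, hτ]
  refine ⟨map (τ.restrict hN) σ u, ?_⟩
  calc rTensor A N.subtype (map (τ.restrict hN) σ u)
      = map τ σ (rTensor A h (comul x)) := by rw [← comp_apply, ← hτN, comp_apply, hu]; rfl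
    _ = (rTensor A h ∘ₗ comul) (σ x) := congr($hστ x).symm

end CommSemiring

section Flat

variable {R A M : Type*} [CommRing R] [AddCommGroup A] [Module R A] [Coalgebra R A]
  [Module.Flat R A] [AddCommGroup M] [Module R M]

/-- Coassociativity turns `h(x₁) ⊗ x₂ ∈ N ⊗ A` into `h(x₁) ⊗ x₂ ⊗ x₃ ∈ N ⊗ A ⊗ A`, so `Δ x` is
killed by `φ ⊗ id` for `φ : A → (M ⊗ A) ⧸ (N ⊗ A)`, `x ↦ [h(x₁) ⊗ x₂]`; flatness of `A` identifies
the kernel of `φ ⊗ id` with `ker φ ⊗ A = comulComap h N ⊗ A`. -/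
theorem comul_mem_range_rTensor_comulComap {h : A →ₗ[R] M} {N : Submodule R M} {x : A}
    (hx : x ∈ comulComap h N) :
    comul x ∈ range (rTensor A (comulComap h N).subtype) := by
  set N' := range (rTensor A N.subtype)
  set E := (_root_.TensorProduct.assoc R M A A).symm.toLinearMap ∘ₗ lTensor M comul
  have hexact : Function.Exact (comulComap h N).subtype (N'.mkQ ∘ₗ rTensor A h ∘ₗ comul) :=
    exact_iff.mpr (by rw [ker_comp, Submodule.ker_mkQ, Submodule.range_subtype]; rfl)
  refine (Module.Flat.rTensor_exact A hexact _).mp ?_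
  have hΔ : rTensor A (N'.mkQ ∘ₗ rTensor A h ∘ₗ comul) ∘ₗ comul =
      rTensor A N'.mkQ ∘ₗ E ∘ₗ rTensor A h ∘ₗ comul := by
    rw [rTensor_comp, comp_assoc, rTensor_rTensor_comp_comul_comp_comul, comp_assoc]
  have hE : rTensor A N'.mkQ ∘ₗ E ∘ₗ rTensor A N.subtype = 0 := by
    rw [comp_assoc, assoc_symm_comp_lTensor_comul_comp_rTensor, ← comp_assoc, ← rTensor_comp,
      range_le_ker_iff.mp (Submodule.ker_mkQ N').ge, rTensor_zero, zero_comp]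
  obtain ⟨u, hu⟩ := hx
  calc rTensor A (N'.mkQ ∘ₗ rTensor A h ∘ₗ comul) (comul x)
      = (rTensor A N'.mkQ ∘ₗ E) ((rTensor A h ∘ₗ comul) x) := congr($hΔ x)
    _ = (rTensor A N'.mkQ ∘ₗ E) (rTensor A N.subtype u) := by rw [hu]
    _ = 0 := congr($hE u)

end Flat

section Field

variable {K A M : Type*} [Field K] [AddCommGroup A] [Module K A] [Coalgebra K A] [IsCocomm K A]
  [AddCommGroup M] [Module K M]

theorem comul_mem_range_map_comulComap {h : A →ₗ[K] M} {N : Submodule K M} {x : A}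
    (hx : x ∈ comulComap h N) :
    comul x ∈ range (map (comulComap h N).subtype (comulComap h N).subtype) := by
  have hr := comul_mem_range_rTensor_comulComap hx
  refine TensorProduct.mem_range_map_subtype_of_mem_range_rTensor_of_mem_range_lTensor hr ?_
  obtain ⟨u, hu⟩ := hr
  refine ⟨_root_.TensorProduct.comm K _ A u, ?_⟩
  rw [← comm_comul K x, ← hu, lTensor_comm]

end Field

end Coalgebra

namespace BialgHom

section Bialgebra

variable {K A B : Type*} [CommRing K] [Semiring A] [Bialgebra K A] [Ring B] [Bialgebra K B]
  (p : A →ₐc[K] B)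

noncomputable def subUnitCounit : A →ₗ[K] B := p.toLinearMap - Algebra.linearMap K B ∘ₗ counit

theorem rTensor_subUnitCounit_comul (x : A) :
    LinearMap.rTensor A p.subUnitCounit (comul x) =
      LinearMap.rTensor A p.toLinearMap (comul x) - 1 ⊗ₜ x := by
  rw [subUnitCounit, LinearMap.rTensor_sub, LinearMap.sub_apply, LinearMap.rTensor_comp,
    LinearMap.comp_apply, Coalgebra.rTensor_counit_comul]
  simp

theorem subUnitCounit_mem_counitKer_iff {C : Subalgebra K B} {x : A} :
    p.subUnitCounit x ∈ C.counitKer ↔ p x ∈ C := by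
  have hε : counit (R := K) (p.subUnitCounit x) = 0 := by simp [subUnitCounit]
  simp only [Subalgebra.counitKer, Submodule.mem_inf, LinearMap.mem_ker, hε, and_true]
  rw [subUnitCounit, LinearMap.sub_apply, Subalgebra.mem_toSubmodule]
  exact C.toSubmodule.sub_mem_iff_left (C.algebraMap_mem _)

end Bialgebra

theorem subUnitCounit_comp_antipode {K A B : Type*} [CommRing K] [Semiring A]
    [HopfAlgebra K A] [Ring B] [HopfAlgebra K B] (p : A →ₐc[K] B) :
    p.subUnitCounit ∘ₗ HopfAlgebra.antipode K = HopfAlgebra.antipode K ∘ₗ p.subUnitCounit := by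
  rw [subUnitCounit, LinearMap.sub_comp, LinearMap.comp_sub, toLinearMap_comp_antipode,
    LinearMap.comp_assoc, HopfAlgebra.counit_comp_antipode]
  congr 1
  ext x
  simp [Algebra.algebraMap_eq_smul_one]

end BialgHom

section HInv

variable {K A B : Type*} [CommRing K] [Ring A] [Bialgebra K A] [Ring B] [Bialgebra K B]
  (p : A →ₐc[K] B) (C : Subalgebra K B)

theorem one_mem_comulComap_subUnitCounit :
    (1 : A) ∈ Coalgebra.comulComap p.subUnitCounit C.counitKer := by
  rw [Coalgebra.comulComap, Submodule.mem_comap, comp_apply, BialgHom.rTensor_subUnitCounit_comul,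
    Bialgebra.comul_one, Algebra.TensorProduct.one_def, rTensor_tmul,
    show p.toLinearMap 1 = 1 from map_one p, sub_self]
  exact zero_mem _

theorem mul_mem_comulComap_subUnitCounit {x y : A}
    (hx : x ∈ Coalgebra.comulComap p.subUnitCounit C.counitKer)
    (hy : y ∈ Coalgebra.comulComap p.subUnitCounit C.counitKer) :
    x * y ∈ Coalgebra.comulComap p.subUnitCounit C.counitKer := by
  let ρ : A →ₐ[K] B ⊗[K] A :=
    (Algebra.TensorProduct.map (p : A →ₐ[K] B) (AlgHom.id K A)).comp (Bialgebra.comulAlgHom K A)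
  have hρ (z : A) : rTensor A p.subUnitCounit (comul z) = ρ z - 1 ⊗ₜ z := by
    rw [BialgHom.rTensor_subUnitCounit_comul]; rfl
  have key : ρ (x * y) - 1 ⊗ₜ (x * y) = (ρ x - 1 ⊗ₜ x) * (ρ y - 1 ⊗ₜ y) +
      (ρ x - 1 ⊗ₜ x) * (1 ⊗ₜ y) + (1 ⊗ₜ x) * (ρ y - 1 ⊗ₜ y) := by
    rw [map_mul, ← mul_one (1 : B), ← Algebra.TensorProduct.tmul_mul_tmul, mul_one]
    noncomm_ring
  have hC (z : A) : (1 : B) ⊗ₜ[K] z ∈ range (rTensor A C.toSubmodule.subtype) :=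
    ⟨⟨1, C.one_mem⟩ ⊗ₜ z, rfl⟩
  simp only [Coalgebra.comulComap, Submodule.mem_comap, comp_apply, hρ] at hx hy ⊢
  rw [key]
  refine add_mem (add_mem ?_ ?_) ?_
  · exact Algebra.TensorProduct.mul_mem_range_rTensor_subtype
      (fun a ha b (hb : b ∈ C.counitKer) ↦ Subalgebra.mul_mem_counitKer_left ha hb.1) hx hy
  · exact Algebra.TensorProduct.mul_mem_range_rTensor_subtype
      (fun a ha b hb ↦ Subalgebra.mul_mem_counitKer_left ha hb) hx (hC y)
  · exact Algebra.TensorProduct.mul_mem_range_rTensor_subtype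
      (fun a ha b hb ↦ Subalgebra.mul_mem_counitKer_right ha hb) (hC x) hy

noncomputable def hInvSubalgebra : Subalgebra K A :=
  (Coalgebra.comulComap p.subUnitCounit C.counitKer).toSubalgebra
    (one_mem_comulComap_subUnitCounit p C) fun _ _ ↦ mul_mem_comulComap_subUnitCounit p C

end HInv

theorem hInv_eq_comulComap {K A B : Type*} [Field K] [Ring A] [HopfAlgebra K A] [Ring B]
    [HopfAlgebra K B] (p : A →ₐc[K] B) (C : Subalgebra K B) :
    hInv p C = Coalgebra.comulComap p.subUnitCounit C.counitKer := by
  ext x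
  rw [SetLike.mem_coe, Coalgebra.comulComap, Submodule.mem_comap, comp_apply,
    BialgHom.rTensor_subUnitCounit_comul]
  rfl

theorem image_hInv_eq_iff_general
    {K A B : Type*} [Field K] [Ring A] [HopfAlgebra K A] [Ring B] [HopfAlgebra K B]
    (hA : _root_.IsCocomm K A) (p : A →ₐc[K] B) (C : Subalgebra K B)
    (hC_antipode : ∀ c ∈ C, HopfAlgebra.antipode (R := K) c ∈ C) :
    p '' hInv p C = (C : Set B) ↔
      ∃ D : Subalgebra K A,
        (∀ d ∈ D, Coalgebra.comul (R := K) d ∈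
          LinearMap.range (TensorProduct.map D.toSubmodule.subtype D.toSubmodule.subtype)) ∧
        (∀ d ∈ D, HopfAlgebra.antipode (R := K) d ∈ D) ∧
        p '' (D : Set A) = (C : Set B) := by
  have : Coalgebra.IsCocomm K A := ⟨hA⟩
  rw [hInv_eq_comulComap]
  constructor
  · intro h
    refine ⟨hInvSubalgebra p C, fun _ ↦ Coalgebra.comul_mem_range_map_comulComap,
      fun _ ↦ Coalgebra.map_mem_comulComap HopfAlgebra.comul_comp_antipode
        p.subUnitCounit_comp_antipode fun _ ↦ Subalgebra.antipode_mem_counitKer hC_antipode, h⟩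
  · rintro ⟨D, hD_comul, -, hDC⟩
    have hD : D.toSubmodule ≤ Coalgebra.comulComap p.subUnitCounit C.counitKer :=
      Coalgebra.le_comulComap hD_comul fun d hd ↦
        p.subUnitCounit_mem_counitKer_iff.mpr (hDC.subset (Set.mem_image_of_mem p hd))
    refine subset_antisymm ?_ (hDC ▸ Set.image_mono hD)
    rintro _ ⟨x, hx, rfl⟩
    exact p.subUnitCounit_mem_counitKer_iff.mp (Coalgebra.apply_mem_of_mem_comulComap hx)

/-- `C = p(p⁻¹(C))` if and only if `C = p(D)` for some Hopf subalgebra `D ⊆ A`. -/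
theorem image_hInv_eq_iff
    {K A B : Type*} [Field K] [Ring A] [HopfAlgebra K A] [Ring B] [HopfAlgebra K B]
    (hA : _root_.IsCocomm K A) (hB : _root_.IsCocomm K B) (p : A →ₐc[K] B) (C : Subalgebra K B)
    (hC_comul : ∀ c ∈ C, Coalgebra.comul (R := K) c ∈
      LinearMap.range (TensorProduct.map C.toSubmodule.subtype C.toSubmodule.subtype))
    (hC_antipode : ∀ c ∈ C, HopfAlgebra.antipode (R := K) c ∈ C) :
    p '' hInv p C = (C : Set B) ↔
      ∃ D : Subalgebra K A,
        (∀ d ∈ D, Coalgebra.comul (R := K) d ∈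
          LinearMap.range (TensorProduct.map D.toSubmodule.subtype D.toSubmodule.subtype)) ∧
        (∀ d ∈ D, HopfAlgebra.antipode (R := K) d ∈ D) ∧
        p '' (D : Set A) = (C : Set B) :=
  image_hInv_eq_iff_general hA p C hC_antipode
end

section
/- Let p : A → B be a morphism of cocommutative Hopf algebras over a field K, C ⊆ B a Hopf subalgebra with inclusion i : C → B, and p⁻¹(C) ⊆ A the h-inverse with inclusion j : p⁻¹(C) → A and restricted map p̂ : p⁻¹(C) → C. Then the square with j, p̂, p, i is a pullback in the category of cocommutative Hopf algebras: for any cocommutative Hopf algebra T and morphisms α : T → A, β : T → C with p∘α = i∘β, α factors (uniquely) through p⁻¹(C) compatibly with β. -/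
open TensorProduct Coalgebra

theorem LinearMap.rTensor_mem_range_rTensor_subtype {R M N P : Type*} [CommSemiring R]
    [AddCommMonoid M] [AddCommMonoid N] [AddCommMonoid P] [Module R M] [Module R N] [Module R P]
    {S : Submodule R M} (f : N →ₗ[R] M) (hf : ∀ n, f n ∈ S) (x : N ⊗[R] P) :
    f.rTensor P x ∈ LinearMap.range (S.subtype.rTensor P) :=
  ⟨(f.codRestrict S hf).rTensor P x, by rw [← LinearMap.comp_apply, ← LinearMap.rTensor_comp]; rfl⟩

section

variable {R T A B : Type*} [CommRing R] [AddCommGroup T] [Module R T] [Coalgebra R T]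

theorem Coalgebra.rTensor_comp_counit_comul {M : Type*} [AddCommGroup M] [Module R M]
    (f : R →ₗ[R] M) (t : T) :
    (f ∘ₗ counit).rTensor T (comul t) = f 1 ⊗ₜ t := by
  rw [LinearMap.rTensor_comp, LinearMap.comp_apply, rTensor_counit_comul,
    LinearMap.rTensor_tmul]

theorem CoalgHom.sub_algebraMap_counit_mem_ker [Ring B] [Bialgebra R B] (β : T →ₗc[R] B)
    (t : T) : β t - algebraMap R B (counit t) ∈ LinearMap.ker (counit (R := R) (A := B)) := by
  simp [CoalgHomClass.counit_comp_apply]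

/-- With `w = (id ⊗ α)(Δ t)`, one has `Δ(α t) = (α ⊗ id) w` and `1 ⊗ α t = (η ∘ ε ⊗ id) w`. -/
theorem CoalgHom.rTensor_comul_sub_one_tmul [AddCommGroup A] [Module R A] [Coalgebra R A]
    [Ring B] [Algebra R B] (α : T →ₗc[R] A) (p : A →ₗ[R] B) (t : T) :
    p.rTensor A (comul (α t)) - (1 : B) ⊗ₜ[R] α t =
      (p ∘ₗ α.toLinearMap - Algebra.linearMap R B ∘ₗ counit).rTensor A
        (α.toLinearMap.lTensor T (comul t)) := by
  have hcomul : comul (α t) = α.toLinearMap.rTensor A (α.toLinearMap.lTensor T (comul t)) := by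
    rw [← LinearMap.comp_apply, LinearMap.rTensor_comp_lTensor]
    exact (CoalgHomClass.map_comp_comul_apply α t).symm
  have hone : (Algebra.linearMap R B ∘ₗ counit).rTensor A (α.toLinearMap.lTensor T (comul t)) =
      (1 : B) ⊗ₜ[R] α t := by
    rw [← LinearMap.comp_apply, LinearMap.rTensor_comp_lTensor, ← LinearMap.lTensor_comp_rTensor,
      LinearMap.comp_apply, Coalgebra.rTensor_comp_counit_comul, LinearMap.lTensor_tmul,
      Algebra.linearMap_apply, map_one]
    rfl
  rw [LinearMap.rTensor_sub, LinearMap.sub_apply, hone, hcomul, ← LinearMap.comp_apply,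
    ← LinearMap.rTensor_comp]

end

/-- `p(x₁) ⊗ x₂ − 1 ⊗ x` for `x = α t` is `(β − η ∘ ε)(t₁) ⊗ α(t₂)`, and `β − η ∘ ε` takes
values in `C⁺ = C ∩ ker ε`. -/
theorem mem_hInv_of_comp_eq {K T A B : Type*} [Field K] [AddCommGroup T] [Module K T]
    [Coalgebra K T] [Ring A] [HopfAlgebra K A] [Ring B] [HopfAlgebra K B]
    (p : A →ₐc[K] B) (C : Subalgebra K B) (α : T →ₗc[K] A) (β : T →ₗc[K] B)
    (hβ : ∀ t, β t ∈ C) (hcomm : ∀ t, p (α t) = β t) (t : T) :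
    α t ∈ hInv p C := by
  have hpα : p.toLinearMap ∘ₗ α.toLinearMap = β.toLinearMap := LinearMap.ext hcomm
  change _ ∈ LinearMap.range _
  rw [α.rTensor_comul_sub_one_tmul, hpα]
  exact LinearMap.rTensor_mem_range_rTensor_subtype (S := C.toSubmodule ⊓ LinearMap.ker counit) _
    (fun t => Submodule.mem_inf.mpr
      ⟨sub_mem (hβ t) (C.algebraMap_mem _), β.sub_algebraMap_counit_mem_ker t⟩) _

theorem hInv_isPullback_general
    {K A B : Type*} [Field K] [Ring A] [HopfAlgebra K A] [Ring B] [HopfAlgebra K B]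
    (p : A →ₐc[K] B) (C : Subalgebra K B)
    {T : Type*} [Ring T] [HopfAlgebra K T]
    (α : T →ₐc[K] A) (β : T →ₐc[K] B)
    (hβ : ∀ t, β t ∈ C) (hcomm : ∀ t, p (α t) = β t) :
    ∃! γ : T → hInv p C, ∀ t : T, ((γ t : A) = α t ∧ p (γ t : A) = β t) :=
  ⟨fun t => ⟨α t, mem_hInv_of_comp_eq p C (α : T →ₗc[K] A) (β : T →ₗc[K] B) hβ hcomm t⟩,
    fun t => ⟨rfl, hcomm t⟩,
    fun _ hγ => funext fun t => Subtype.ext (hγ t).1⟩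

/-- The square formed by the inclusions `j : p⁻¹(C) → A`, `i : C → B`, the restriction
`p̂ : p⁻¹(C) → C` and `p : A → B` is a pullback in cocommutative Hopf algebras: any
`α : T → A` and `β : T → B` landing in `C` with `p ∘ α = i ∘ β` factor uniquely
through `p⁻¹(C)` compatibly with `β`. -/
theorem hInv_isPullback
    {K A B : Type*} [Field K] [Ring A] [HopfAlgebra K A] [Ring B] [HopfAlgebra K B]
    (hA : _root_.IsCocomm K A) (hB : _root_.IsCocomm K B) (p : A →ₐc[K] B) (C : Subalgebra K B)
    (hC_comul : ∀ c ∈ C, Coalgebra.comul (R := K) c ∈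
      LinearMap.range (TensorProduct.map C.toSubmodule.subtype C.toSubmodule.subtype))
    (hC_antipode : ∀ c ∈ C, HopfAlgebra.antipode (R := K) c ∈ C)
    {T : Type*} [Ring T] [HopfAlgebra K T] (hT : _root_.IsCocomm K T)
    (α : T →ₐc[K] A) (β : T →ₐc[K] B)
    (hβ : ∀ t, β t ∈ C) (hcomm : ∀ t, p (α t) = β t) :
    ∃! γ : T → hInv p C, ∀ t : T, ((γ t : A) = α t ∧ p (γ t : A) = β t) :=
  hInv_isPullback_general p C α β hβ hcomm
end

section
/- Let d : X → B be a crossed module of cocommutative Hopf algebras over a field K (so X is a B-module Hopf algebra, d is a Hopf algebra morphism with d(ᵇx) = b₁ d(x) S(b₂) and the Peiffer identity ^{d(y)}x = y₁ x S(y₂)). Then in the smash product X ⋊ B, the maps p₂(x⊗b) = ε(x)b, p₁(x⊗b) = d(x)b, and e(b) = 1⊗b are Hopf algebra morphisms, and p₁ ∘ e = p₂ ∘ e = id_B, so they form a reflexive graph in the category of cocommutative Hopf algebras. -/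
open TensorProduct Coalgebra

/-- The smash-product multiplication on `X ⊗ B` induced by an action
`ξ : B ⊗ X → X`: it sends `(x ⊗ b) ⊗ (x' ⊗ b')` to `x·(ᵇ¹x') ⊗ b₂b'`. -/
noncomputable def smashMul {K X B : Type*} [Field K] [Ring X] [HopfAlgebra K X]
    [Ring B] [HopfAlgebra K B] (ξ : B ⊗[K] X →ₗ[K] X) :
    (X ⊗[K] B) ⊗[K] (X ⊗[K] B) →ₗ[K] X ⊗[K] B :=
  (TensorProduct.map
      ((LinearMap.mul' K X) ∘ₗ (LinearMap.lTensor X ξ) ∘ₗ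
        (TensorProduct.assoc K X B X).toLinearMap)
      (LinearMap.mul' K B)) ∘ₗ
    (TensorProduct.tensorTensorTensorComm K (X ⊗[K] B) B X B).toLinearMap ∘ₗ
    (TensorProduct.map
      ((TensorProduct.assoc K X B B).symm.toLinearMap ∘ₗ
        (LinearMap.lTensor X (Coalgebra.comul (R := K) (A := B))))
      (LinearMap.id : X ⊗[K] B →ₗ[K] X ⊗[K] B))

/-- The tensor-product comultiplication on `X ⊗ B`. -/
noncomputable def smashComul {K X B : Type*} [Field K] [Ring X] [HopfAlgebra K X]
    [Ring B] [HopfAlgebra K B] :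
    X ⊗[K] B →ₗ[K] (X ⊗[K] B) ⊗[K] (X ⊗[K] B) :=
  (TensorProduct.tensorTensorTensorComm K X X B B).toLinearMap ∘ₗ
    (TensorProduct.map (Coalgebra.comul (R := K)) (Coalgebra.comul (R := K)))

/-- The tensor-product counit on `X ⊗ B`. -/
noncomputable def smashCounit {K X B : Type*} [Field K] [Ring X] [HopfAlgebra K X]
    [Ring B] [HopfAlgebra K B] : X ⊗[K] B →ₗ[K] K :=
  (TensorProduct.lid K K).toLinearMap ∘ₗ
    (TensorProduct.map (Coalgebra.counit (R := K)) (Coalgebra.counit (R := K)))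

/-- `p₁(x ⊗ b) = d(x)b`. -/
noncomputable def smashFst {K X B : Type*} [Field K] [Ring X] [HopfAlgebra K X]
    [Ring B] [HopfAlgebra K B] (d : X →ₐc[K] B) : X ⊗[K] B →ₗ[K] B :=
  (LinearMap.mul' K B) ∘ₗ TensorProduct.map d.toLinearMap LinearMap.id

/-- `p₂(x ⊗ b) = ε(x)b`. -/
noncomputable def smashSnd {K X B : Type*} [Field K] [Ring X] [HopfAlgebra K X]
    [Ring B] [HopfAlgebra K B] : X ⊗[K] B →ₗ[K] B :=
  (TensorProduct.lid K B).toLinearMap ∘ₗ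
    LinearMap.rTensor B (Coalgebra.counit (R := K) (A := X))

/-- `e(b) = 1 ⊗ b`. -/
noncomputable def smashUnit {K X B : Type*} [Field K] [Ring X] [HopfAlgebra K X]
    [Ring B] [HopfAlgebra K B] : B →ₗ[K] X ⊗[K] B :=
  (TensorProduct.mk K X B) 1

/-! On the coalgebra side `X ⋊ B` is the tensor-product coalgebra, and `p₂ = lid ∘ (ε ⊗ id)`,
`p₁ = μ_B ∘ (d ⊗ id)` and `e = (η ⊗ id) ∘ lid⁻¹` are composites of coalgebra morphisms.
Multiplicativity of `p₂` and `e` only needs the action to respect counit and unit. For `p₁`,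
equivariance of `d` turns `d(x) d(ᵇ¹x') b₂ b'` into `d(x) b₁ d(x') S(b₂) b₃ b'`, which is
`d(x) b d(x') b'` by coassociativity and the antipode axiom. -/

open HopfAlgebra

section AdjointAction
variable {K A ι : Type*} [CommSemiring K] [Semiring A] [HopfAlgebra K A]

theorem Coalgebra.sum_counit_right_smul {a : A} (R : Coalgebra.Repr K a ι) :
    ∑ i ∈ R.index, Coalgebra.counit (R := K) (R.right i) • R.left i = a := by
  simpa only [map_sum, _root_.TensorProduct.rid_tmul, one_smul]
    using congr(_root_.TensorProduct.rid K A $(Coalgebra.sum_tmul_counit_eq R))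

theorem adAct_tmul {a : A} (R : Coalgebra.Repr K a ι) (c : A) :
    adAct K A (a ⊗ₜ c) = ∑ i ∈ R.index, R.left i * c * antipode K (R.right i) := by
  simp [adAct, ← R.eq, sum_tmul, mul_assoc]

theorem sum_adAct_mul {b : A} (R : Coalgebra.Repr K b ι) (c : A) :
    ∑ i ∈ R.index, adAct K A (R.left i ⊗ₜ c) * R.right i = b * c := by
  let Φ : A ⊗[K] (A ⊗[K] A) →ₗ[K] A :=
    LinearMap.mul' K A ∘ₗ
      TensorProduct.map (LinearMap.mulRight K c) (LinearMap.mul' K A ∘ₗ (antipode K).rTensor A)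
  have hcoassoc := congrArg Φ
    (Coalgebra.sum_tmul_tmul_eq R (fun i => ℛ K (R.left i)) (fun i => ℛ K (R.right i)))
  simp only [Φ, map_sum, LinearMap.comp_apply, TensorProduct.map_tmul, LinearMap.rTensor_tmul,
    LinearMap.mul'_apply, LinearMap.mulRight_apply] at hcoassoc
  calc ∑ i ∈ R.index, adAct K A (R.left i ⊗ₜ c) * R.right i
      = ∑ i ∈ R.index, ∑ j ∈ (ℛ K (R.left i)).index, (ℛ K (R.left i)).left j * c *
          (antipode K ((ℛ K (R.left i)).right j) * R.right i) := by
        simp only [adAct_tmul (ℛ K _), Finset.sum_mul, mul_assoc]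
    _ = ∑ i ∈ R.index, ∑ j ∈ (ℛ K (R.right i)).index, R.left i * c *
          (antipode K ((ℛ K (R.right i)).left j) * (ℛ K (R.right i)).right j) := hcoassoc
    _ = ∑ i ∈ R.index, Coalgebra.counit (R := K) (R.right i) • R.left i * c := by
        simp [← Finset.mul_sum, sum_antipode_mul_eq_smul]
    _ = b * c := by rw [← Finset.sum_mul, Coalgebra.sum_counit_right_smul]

end AdjointAction

section SmashProduct
variable {K X B ι : Type*} [Field K] [Ring X] [HopfAlgebra K X] [Ring B] [HopfAlgebra K B]

@[simp]
theorem smashSnd_tmul (x : X) (b : B) :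
    (smashSnd : X ⊗[K] B →ₗ[K] B) (x ⊗ₜ b) = Coalgebra.counit (R := K) x • b := by
  simp [smashSnd]

@[simp]
theorem smashFst_tmul (d : X →ₐc[K] B) (x : X) (b : B) : smashFst d (x ⊗ₜ b) = d x * b := by
  simp [smashFst, BialgHom.toCoalgHom_apply]

@[simp]
theorem smashUnit_apply (b : B) : (smashUnit : B →ₗ[K] X ⊗[K] B) b = 1 ⊗ₜ b := rfl

theorem smashMul_tmul (ξ : B ⊗[K] X →ₗ[K] X) (x x' : X) {b : B} (R : Coalgebra.Repr K b ι)
    (b' : B) :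
    smashMul ξ ((x ⊗ₜ b) ⊗ₜ (x' ⊗ₜ b'))
      = ∑ i ∈ R.index, (x * ξ (R.left i ⊗ₜ x')) ⊗ₜ[K] (R.right i * b') := by
  simp [smashMul, ← R.eq, tmul_sum, sum_tmul]

theorem smashFst_comp_smashUnit (d : X →ₐc[K] B) : smashFst d ∘ₗ smashUnit = LinearMap.id := by
  ext b
  simp

theorem smashSnd_comp_smashUnit :
    smashSnd ∘ₗ (smashUnit : B →ₗ[K] X ⊗[K] B) = LinearMap.id := by
  ext b
  simp

theorem smashComul_eq_comul : (smashComul : X ⊗[K] B →ₗ[K] _) = Coalgebra.comul := rfl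

theorem smashCounit_eq_counit : (smashCounit : X ⊗[K] B →ₗ[K] K) = Coalgebra.counit := by
  ext x b
  simp [smashCounit, mul_comm]

noncomputable def smashSndCoalgHom : X ⊗[K] B →ₗc[K] B :=
  (Coalgebra.TensorProduct.lid K B : K ⊗[K] B →ₗc[K] B).comp
    (Coalgebra.TensorProduct.map (Coalgebra.counitCoalgHom K X) (CoalgHom.id K B))

theorem smashSndCoalgHom_toLinearMap :
    (smashSndCoalgHom : X ⊗[K] B →ₗc[K] B).toLinearMap = smashSnd := by
  ext x b
  simp [smashSndCoalgHom]

noncomputable def smashFstCoalgHom (d : X →ₐc[K] B) : X ⊗[K] B →ₗc[K] B :=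
  (Bialgebra.mulCoalgHom K B).comp (Coalgebra.TensorProduct.map (d : X →ₗc[K] B) (CoalgHom.id K B))

theorem smashFstCoalgHom_toLinearMap (d : X →ₐc[K] B) :
    (smashFstCoalgHom d).toLinearMap = smashFst d := by
  ext x b
  simp [smashFstCoalgHom]

noncomputable def smashUnitCoalgHom : B →ₗc[K] X ⊗[K] B :=
  (Coalgebra.TensorProduct.map (Bialgebra.unitBialgHom K X : K →ₗc[K] X) (CoalgHom.id K B)).comp
    ((Coalgebra.TensorProduct.lid K B).symm : B →ₗc[K] K ⊗[K] B)

theorem smashUnitCoalgHom_toLinearMap :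
    (smashUnitCoalgHom : B →ₗc[K] X ⊗[K] B).toLinearMap = smashUnit := by
  ext b
  simp [smashUnitCoalgHom, Bialgebra.unitBialgHom]

theorem comul_comp_smashSnd :
    Coalgebra.comul ∘ₗ (smashSnd : X ⊗[K] B →ₗ[K] B)
      = TensorProduct.map smashSnd smashSnd ∘ₗ smashComul := by
  rw [← smashSndCoalgHom_toLinearMap, smashComul_eq_comul]
  exact (smashSndCoalgHom : X ⊗[K] B →ₗc[K] B).map_comp_comul.symm

theorem counit_comp_smashSnd :
    Coalgebra.counit ∘ₗ (smashSnd : X ⊗[K] B →ₗ[K] B) = smashCounit := by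
  rw [← smashSndCoalgHom_toLinearMap, smashCounit_eq_counit]
  exact (smashSndCoalgHom : X ⊗[K] B →ₗc[K] B).counit_comp

theorem comul_comp_smashFst (d : X →ₐc[K] B) :
    Coalgebra.comul ∘ₗ smashFst d = TensorProduct.map (smashFst d) (smashFst d) ∘ₗ smashComul := by
  rw [← smashFstCoalgHom_toLinearMap, smashComul_eq_comul]
  exact (smashFstCoalgHom d).map_comp_comul.symm

theorem counit_comp_smashFst (d : X →ₐc[K] B) :
    Coalgebra.counit ∘ₗ smashFst d = smashCounit := by
  rw [← smashFstCoalgHom_toLinearMap, smashCounit_eq_counit]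
  exact (smashFstCoalgHom d).counit_comp

theorem smashComul_comp_smashUnit :
    smashComul ∘ₗ (smashUnit : B →ₗ[K] X ⊗[K] B)
      = TensorProduct.map smashUnit smashUnit ∘ₗ Coalgebra.comul := by
  rw [← smashUnitCoalgHom_toLinearMap, smashComul_eq_comul]
  exact (smashUnitCoalgHom : B →ₗc[K] X ⊗[K] B).map_comp_comul.symm

theorem smashCounit_comp_smashUnit :
    smashCounit ∘ₗ (smashUnit : B →ₗ[K] X ⊗[K] B) = Coalgebra.counit := by
  rw [← smashUnitCoalgHom_toLinearMap, smashCounit_eq_counit]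
  exact (smashUnitCoalgHom : B →ₗc[K] X ⊗[K] B).counit_comp

theorem smashSnd_comp_smashMul {ξ : B ⊗[K] X →ₗ[K] X}
    (hξ : ∀ (b : B) (x : X), Coalgebra.counit (R := K) (ξ (b ⊗ₜ[K] x))
      = Coalgebra.counit (R := K) b * Coalgebra.counit (R := K) x) :
    smashSnd ∘ₗ smashMul ξ = LinearMap.mul' K B ∘ₗ TensorProduct.map smashSnd smashSnd := by
  refine TensorProduct.ext_fourfold' fun x b x' b' => ?_
  simp only [LinearMap.comp_apply, smashMul_tmul ξ x x' (ℛ K b), map_sum, smashSnd_tmul,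
    Bialgebra.counit_mul, hξ, TensorProduct.map_tmul, LinearMap.mul'_apply, smul_mul_smul_comm]
  conv_rhs => rw [← Coalgebra.sum_counit_smul (ℛ K b)]
  simp only [Finset.sum_mul, Finset.smul_sum, smul_mul_assoc, smul_smul]
  exact Finset.sum_congr rfl fun i _ => by congr 1; ring

theorem smashFst_comp_smashMul {ξ : B ⊗[K] X →ₗ[K] X} {d : X →ₐc[K] B}
    (hequiv : d.toLinearMap ∘ₗ ξ = adAct K B ∘ₗ LinearMap.lTensor B d.toLinearMap) :
    smashFst d ∘ₗ smashMul ξ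
      = LinearMap.mul' K B ∘ₗ TensorProduct.map (smashFst d) (smashFst d) := by
  have hd : ∀ b x, d (ξ (b ⊗ₜ x)) = adAct K B (b ⊗ₜ d x) := fun b x =>
    LinearMap.congr_fun hequiv (b ⊗ₜ x)
  refine TensorProduct.ext_fourfold' fun x b x' b' => ?_
  simp only [LinearMap.comp_apply, smashMul_tmul ξ x x' (ℛ K b), map_sum, smashFst_tmul, map_mul,
    hd, TensorProduct.map_tmul, LinearMap.mul'_apply]
  calc ∑ i ∈ (ℛ K b).index, d x * adAct K B ((ℛ K b).left i ⊗ₜ d x') * ((ℛ K b).right i * b')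
      = d x * (∑ i ∈ (ℛ K b).index, adAct K B ((ℛ K b).left i ⊗ₜ d x') * (ℛ K b).right i) * b' := by
        simp only [Finset.mul_sum, Finset.sum_mul, mul_assoc]
    _ = d x * b * (d x' * b') := by rw [sum_adAct_mul, mul_assoc, mul_assoc, mul_assoc]

theorem smashUnit_comp_mul' {ξ : B ⊗[K] X →ₗ[K] X}
    (hξ : ∀ b : B, ξ (b ⊗ₜ[K] (1 : X)) = Coalgebra.counit (R := K) b • (1 : X)) :
    smashUnit ∘ₗ LinearMap.mul' K B = smashMul ξ ∘ₗ TensorProduct.map smashUnit smashUnit := by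
  refine TensorProduct.ext' fun b b' => ?_
  simp only [LinearMap.comp_apply, LinearMap.mul'_apply, TensorProduct.map_tmul, smashUnit_apply,
    smashMul_tmul ξ 1 1 (ℛ K b), one_mul, hξ, smul_tmul, ← smul_mul_assoc, ← tmul_sum,
    ← Finset.sum_mul, Coalgebra.sum_counit_smul]

end SmashProduct

theorem crossedModule_reflexiveGraph_general
    {K X B : Type*} [Field K] [Ring X] [HopfAlgebra K X] [Ring B] [HopfAlgebra K B]
    (ξ : B ⊗[K] X →ₗ[K] X)
    -- `X` is a `B`-module Hopf algebra:
    (hact_unit : ∀ b : B, ξ (b ⊗ₜ[K] (1 : X)) = Coalgebra.counit (R := K) b • (1 : X))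
    (hact_counit : ∀ (b : B) (x : X), Coalgebra.counit (R := K) (ξ (b ⊗ₜ[K] x))
      = Coalgebra.counit (R := K) b * Coalgebra.counit (R := K) x)
    -- `d` is a crossed module:
    (d : X →ₐc[K] B)
    (hequiv : d.toLinearMap ∘ₗ ξ = adAct K B ∘ₗ LinearMap.lTensor B d.toLinearMap) :
    -- reflexivity: `p₁ ∘ e = p₂ ∘ e = id`
    (smashFst d ∘ₗ smashUnit = (LinearMap.id : B →ₗ[K] B)) ∧
    (smashSnd ∘ₗ (smashUnit : B →ₗ[K] X ⊗[K] B) = LinearMap.id) ∧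
    -- `p₂` is a Hopf algebra morphism
    ((smashSnd : X ⊗[K] B →ₗ[K] B) ∘ₗ smashMul ξ
      = (LinearMap.mul' K B) ∘ₗ TensorProduct.map smashSnd smashSnd) ∧
    (smashSnd ((1 : X) ⊗ₜ[K] (1 : B)) = 1) ∧
    ((Coalgebra.comul (R := K)) ∘ₗ (smashSnd : X ⊗[K] B →ₗ[K] B)
      = TensorProduct.map smashSnd smashSnd ∘ₗ smashComul) ∧
    ((Coalgebra.counit (R := K)) ∘ₗ (smashSnd : X ⊗[K] B →ₗ[K] B) = smashCounit) ∧
    -- `p₁` is a Hopf algebra morphism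
    (smashFst d ∘ₗ smashMul ξ
      = (LinearMap.mul' K B) ∘ₗ TensorProduct.map (smashFst d) (smashFst d)) ∧
    (smashFst d ((1 : X) ⊗ₜ[K] (1 : B)) = 1) ∧
    ((Coalgebra.comul (R := K)) ∘ₗ smashFst d
      = TensorProduct.map (smashFst d) (smashFst d) ∘ₗ smashComul) ∧
    ((Coalgebra.counit (R := K)) ∘ₗ smashFst d = smashCounit) ∧
    -- `e` is a Hopf algebra morphism
    ((smashUnit : B →ₗ[K] X ⊗[K] B) ∘ₗ (LinearMap.mul' K B)
      = smashMul ξ ∘ₗ TensorProduct.map smashUnit smashUnit) ∧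
    (smashUnit (1 : B) = (1 : X) ⊗ₜ[K] (1 : B)) ∧
    (smashComul ∘ₗ (smashUnit : B →ₗ[K] X ⊗[K] B)
      = TensorProduct.map smashUnit smashUnit ∘ₗ (Coalgebra.comul (R := K))) ∧
    (smashCounit ∘ₗ (smashUnit : B →ₗ[K] X ⊗[K] B) = Coalgebra.counit (R := K)) :=
  ⟨smashFst_comp_smashUnit d, smashSnd_comp_smashUnit,
    smashSnd_comp_smashMul hact_counit, by simp, comul_comp_smashSnd, counit_comp_smashSnd,
    smashFst_comp_smashMul hequiv, by simp, comul_comp_smashFst d, counit_comp_smashFst d,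
    smashUnit_comp_mul' hact_unit, rfl, smashComul_comp_smashUnit, smashCounit_comp_smashUnit⟩

/-- Given a crossed module `d : X → B` of cocommutative Hopf algebras (with action
`ξ`, equivariance `d(ᵇx) = b₁ d(x) S(b₂)` and the Peiffer identity
`^{d(y)}x = y₁ x S(y₂)`), the maps `p₂(x⊗b) = ε(x)b`, `p₁(x⊗b) = d(x)b` and
`e(b) = 1⊗b` on the smash product `X ⋊ B` are Hopf algebra morphisms satisfying
`p₁ ∘ e = p₂ ∘ e = id`, so they form a reflexive graph of cocommutative Hopf
algebras. -/
theorem crossedModule_reflexiveGraph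
    {K X B : Type*} [Field K] [Ring X] [HopfAlgebra K X] [Ring B] [HopfAlgebra K B]
    (hX : _root_.IsCocomm K X) (hB : _root_.IsCocomm K B)
    (ξ : B ⊗[K] X →ₗ[K] X)
    -- `X` is a `B`-module Hopf algebra:
    (hact_assoc : ∀ (b b' : B) (x : X), ξ ((b * b') ⊗ₜ[K] x)
      = ξ (b ⊗ₜ[K] ξ (b' ⊗ₜ[K] x)))
    (hact_one : ∀ x : X, ξ ((1 : B) ⊗ₜ[K] x) = x)
    (hact_mul : ξ ∘ₗ LinearMap.lTensor B (LinearMap.mul' K X)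
      = (LinearMap.mul' K X) ∘ₗ TensorProduct.map ξ ξ ∘ₗ
        (TensorProduct.tensorTensorTensorComm K B B X X).toLinearMap ∘ₗ
        LinearMap.rTensor (X ⊗[K] X) (Coalgebra.comul (R := K)))
    (hact_unit : ∀ b : B, ξ (b ⊗ₜ[K] (1 : X)) = Coalgebra.counit (R := K) b • (1 : X))
    (hact_comul : (Coalgebra.comul (R := K)) ∘ₗ ξ
      = TensorProduct.map ξ ξ ∘ₗ
        (TensorProduct.tensorTensorTensorComm K B B X X).toLinearMap ∘ₗ
        TensorProduct.map (Coalgebra.comul (R := K)) (Coalgebra.comul (R := K)))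
    (hact_counit : ∀ (b : B) (x : X), Coalgebra.counit (R := K) (ξ (b ⊗ₜ[K] x))
      = Coalgebra.counit (R := K) b * Coalgebra.counit (R := K) x)
    -- `d` is a crossed module:
    (d : X →ₐc[K] B)
    (hequiv : d.toLinearMap ∘ₗ ξ = adAct K B ∘ₗ LinearMap.lTensor B d.toLinearMap)
    (hPeiffer : ξ ∘ₗ LinearMap.rTensor X d.toLinearMap = adAct K X) :
    -- reflexivity: `p₁ ∘ e = p₂ ∘ e = id`
    (smashFst d ∘ₗ smashUnit = (LinearMap.id : B →ₗ[K] B)) ∧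
    (smashSnd ∘ₗ (smashUnit : B →ₗ[K] X ⊗[K] B) = LinearMap.id) ∧
    -- `p₂` is a Hopf algebra morphism
    ((smashSnd : X ⊗[K] B →ₗ[K] B) ∘ₗ smashMul ξ
      = (LinearMap.mul' K B) ∘ₗ TensorProduct.map smashSnd smashSnd) ∧
    (smashSnd ((1 : X) ⊗ₜ[K] (1 : B)) = 1) ∧
    ((Coalgebra.comul (R := K)) ∘ₗ (smashSnd : X ⊗[K] B →ₗ[K] B)
      = TensorProduct.map smashSnd smashSnd ∘ₗ smashComul) ∧
    ((Coalgebra.counit (R := K)) ∘ₗ (smashSnd : X ⊗[K] B →ₗ[K] B) = smashCounit) ∧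
    -- `p₁` is a Hopf algebra morphism
    (smashFst d ∘ₗ smashMul ξ
      = (LinearMap.mul' K B) ∘ₗ TensorProduct.map (smashFst d) (smashFst d)) ∧
    (smashFst d ((1 : X) ⊗ₜ[K] (1 : B)) = 1) ∧
    ((Coalgebra.comul (R := K)) ∘ₗ smashFst d
      = TensorProduct.map (smashFst d) (smashFst d) ∘ₗ smashComul) ∧
    ((Coalgebra.counit (R := K)) ∘ₗ smashFst d = smashCounit) ∧
    -- `e` is a Hopf algebra morphism
    ((smashUnit : B →ₗ[K] X ⊗[K] B) ∘ₗ (LinearMap.mul' K B)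
      = smashMul ξ ∘ₗ TensorProduct.map smashUnit smashUnit) ∧
    (smashUnit (1 : B) = (1 : X) ⊗ₜ[K] (1 : B)) ∧
    (smashComul ∘ₗ (smashUnit : B →ₗ[K] X ⊗[K] B)
      = TensorProduct.map smashUnit smashUnit ∘ₗ (Coalgebra.comul (R := K))) ∧
    (smashCounit ∘ₗ (smashUnit : B →ₗ[K] X ⊗[K] B) = Coalgebra.counit (R := K)) :=
  crossedModule_reflexiveGraph_general ξ hact_unit hact_counit d hequiv
end
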